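/- arXiv:2310.15131 — 3 statements merged into one kernel-verified Lean document; each statement's English description precedes it below -/
import Mathlib

section
/- The odds ratio OR(x, y) = (y/(1−y)) / (x/(1−x)) is not collapsible: there exist points p0 ≠ p1 in (0,1)² with OR(p0) = OR(p1) = m for some m, and some t ∈ (0,1), such that the convex combination (1−t)p0 + t·p1 has odds ratio different from m. -/
noncomputable def OR (x y : ℝ) : ℝ := (y * (1 - x)) / (x * (1 - y))

/-- The odds ratio is not collapsible. -/
theorem OR_not_collapsible :
    ∃ (m : ℝ) (p0 p1 : ℝ × ℝ) (t : ℝ), p0 ≠ p1 ∧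
      p0 ∈ Set.Ioo (0:ℝ) 1 ×ˢ Set.Ioo (0:ℝ) 1 ∧
      p1 ∈ Set.Ioo (0:ℝ) 1 ×ˢ Set.Ioo (0:ℝ) 1 ∧
      OR p0.1 p0.2 = m ∧ OR p1.1 p1.2 = m ∧ t ∈ Set.Ioo (0:ℝ) 1 ∧
      OR ((1 - t) * p0.1 + t * p1.1) ((1 - t) * p0.2 + t * p1.2) ≠ m := by
  refine ⟨2, (1/3, 1/2), (1/2, 2/3), 1/2, ?_, ?_, ?_, ?_, ?_, ?_, ?_⟩ <;>
    simp [OR, Set.mem_Ioo, Prod.ext_iff] <;> norm_num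
end

section
/- The hazard ratio HR(x, y) = log(1−y) / log(1−x) is not collapsible: there exist points p0 ≠ p1 in (0,1)² with HR(p0) = HR(p1) = m for some m, and some t ∈ (0,1), such that HR at the convex combination (1−t)p0 + t·p1 differs from m. -/
noncomputable def HR (x y : ℝ) : ℝ := Real.log (1 - y) / Real.log (1 - x)

/-- The hazard ratio is not collapsible. -/
theorem HR_not_collapsible :
    ∃ (m : ℝ) (p0 p1 : ℝ × ℝ) (t : ℝ), p0 ≠ p1 ∧
      p0 ∈ Set.Ioo (0:ℝ) 1 ×ˢ Set.Ioo (0:ℝ) 1 ∧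
      p1 ∈ Set.Ioo (0:ℝ) 1 ×ˢ Set.Ioo (0:ℝ) 1 ∧
      HR p0.1 p0.2 = m ∧ HR p1.1 p1.2 = m ∧ t ∈ Set.Ioo (0:ℝ) 1 ∧
      HR ((1 - t) * p0.1 + t * p1.1) ((1 - t) * p0.2 + t * p1.2) ≠ m := by
  refine ⟨2, (1/2, 3/4), (3/4, 15/16), 1/2, by norm_num [Prod.ext_iff], ?_, ?_, ?_, ?_, by norm_num, ?_⟩
  · constructor <;> norm_num
  · constructor <;> norm_num
  · show Real.log (1 - 3/4) / Real.log (1 - 1/2) = 2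
    have h : Real.log (1 - 3/4 : ℝ) = 2 * Real.log (1 - 1/2 : ℝ) := by
      rw [show (1 - 3/4 : ℝ) = (1 - 1/2)^2 by norm_num, Real.log_pow]
      push_cast; ring
    rw [h, mul_div_assoc, div_self (ne_of_lt (Real.log_neg (by norm_num) (by norm_num))), mul_one]
  · show Real.log (1 - 15/16) / Real.log (1 - 3/4) = 2
    have h : Real.log (1 - 15/16 : ℝ) = 2 * Real.log (1 - 3/4 : ℝ) := by
      rw [show (1 - 15/16 : ℝ) = (1 - 3/4)^2 by norm_num, Real.log_pow]
      push_cast; ring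
    rw [h, mul_div_assoc, div_self (ne_of_lt (Real.log_neg (by norm_num) (by norm_num))), mul_one]
  · show Real.log (1 - ((1-1/2) * (3/4) + (1/2) * (15/16))) /
        Real.log (1 - ((1-1/2) * (1/2) + (1/2) * (3/4))) ≠ 2
    have e1 : (1 - ((1-1/2) * (3/4) + (1/2) * (15/16)) : ℝ) = 5/32 := by norm_num
    have e2 : (1 - ((1-1/2) * (1/2) + (1/2) * (3/4)) : ℝ) = 3/8 := by norm_num
    rw [e1, e2]
    intro h
    have hne : Real.log (3/8 : ℝ) ≠ 0 :=
      ne_of_lt (Real.log_neg (by norm_num) (by norm_num))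
    have h2 : Real.log (5/32 : ℝ) = Real.log ((3/8 : ℝ)^2) := by
      rw [Real.log_pow]; push_cast
      field_simp at h; linarith
    have := Real.log_injOn_pos (by norm_num : (5/32:ℝ) ∈ Set.Ioi 0)
      (by norm_num : ((3/8:ℝ)^2) ∈ Set.Ioi 0) h2
    norm_num at this
end

section
/- For m > 1 and x0 ≠ x1 in (0,1), let y(x) = mx/(1+(m−1)x) be the odds-ratio-m contour. Then for t ∈ (0,1), the point ((1−t)x0 + t·x1, (1−t)y(x0) + t·y(x1)) lies strictly below the contour: its odds ratio is strictly less than m. -/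
/-!
For `x ∈ (0,1)` and `y < 1`, the odds ratio `OR x y` is strictly increasing in `y`, so
`OR x y < m` says exactly that `(x, y)` lies below the contour `y = m x / (1 + (m - 1) x)`.
For `m > 1` this contour is strictly concave, so its chords lie strictly below it.
-/

noncomputable def orContour (m x : ℝ) : ℝ := m * x / (1 + (m - 1) * x)

lemma orContour_lt_one {m x : ℝ} (hm : 0 ≤ m) (hx0 : 0 ≤ x) (hx1 : x < 1) :
    orContour m x < 1 := by
  rw [orContour, div_lt_one (by nlinarith)]
  linarith

lemma OR_lt_iff_lt_orContour {m x y : ℝ} (hm : 0 ≤ m) (hx0 : 0 < x) (hx1 : x < 1)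
    (hy : y < 1) : OR x y < m ↔ y < orContour m x := by
  have hden : 0 < 1 + (m - 1) * x := by nlinarith
  rw [OR, orContour, div_lt_iff₀ (by nlinarith), lt_div_iff₀ hden]
  constructor <;> intro h <;> linarith

lemma orContour_sub_chord {m x y a b : ℝ} (hab : a + b = 1)
    (hx : 1 + (m - 1) * x ≠ 0) (hy : 1 + (m - 1) * y ≠ 0)
    (hxy : 1 + (m - 1) * (a * x + b * y) ≠ 0) :
    orContour m (a * x + b * y) - (a * orContour m x + b * orContour m y) =
      m * (m - 1) * a * b * (x - y) ^ 2 /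
        ((1 + (m - 1) * x) * (1 + (m - 1) * y) * (1 + (m - 1) * (a * x + b * y))) := by
  rw [orContour, orContour, orContour, mul_div_assoc', mul_div_assoc', div_add_div _ _ hx hy,
    div_sub_div _ _ hxy (mul_ne_zero hx hy), div_eq_div_iff (mul_ne_zero hxy (mul_ne_zero hx hy))
    (mul_ne_zero (mul_ne_zero hx hy) hxy)]
  obtain rfl : b = 1 - a := by linarith
  ring

lemma strictConcaveOn_orContour {m : ℝ} (hm : 1 < m) :
    StrictConcaveOn ℝ (Set.Ici 0) (orContour m) := by
  refine ⟨convex_Ici 0, fun x hx y hy hxy a b ha hb hab => ?_⟩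
  have hpos : ∀ z ∈ Set.Ici (0 : ℝ), 0 < 1 + (m - 1) * z := fun z hz => by
    have : 0 ≤ (m - 1) * z := mul_nonneg (by linarith) hz
    linarith
  have hmid : a * x + b * y ∈ Set.Ici (0 : ℝ) :=
    add_nonneg (mul_nonneg ha.le hx) (mul_nonneg hb.le hy)
  have hgap_pos : 0 < m * (m - 1) * a * b * (x - y) ^ 2 /
      ((1 + (m - 1) * x) * (1 + (m - 1) * y) * (1 + (m - 1) * (a * x + b * y))) := by
    have hxy' := sub_ne_zero.mpr hxy
    have hm' : 0 < m - 1 := by linarith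
    have := hpos x hx; have := hpos y hy; have := hpos _ hmid
    positivity
  rw [← orContour_sub_chord hab (hpos x hx).ne' (hpos y hy).ne' (hpos _ hmid).ne'] at hgap_pos
  simp only [smul_eq_mul]
  linarith

/-- Chord points of an odds-ratio contour with m > 1 have odds ratio strictly less
than m. -/
theorem OR_chord_lt (m : ℝ) (hm : 1 < m) (x0 x1 t : ℝ)
    (hx0 : x0 ∈ Set.Ioo (0:ℝ) 1) (hx1 : x1 ∈ Set.Ioo (0:ℝ) 1)
    (hne : x0 ≠ x1) (ht : t ∈ Set.Ioo (0:ℝ) 1) :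
    OR ((1 - t) * x0 + t * x1)
       ((1 - t) * (m * x0 / (1 + (m - 1) * x0)) + t * (m * x1 / (1 + (m - 1) * x1)))
      < m := by
  obtain ⟨hx00, hx01⟩ := hx0
  obtain ⟨hx10, hx11⟩ := hx1
  obtain ⟨ht0, ht1⟩ := ht
  have hX0 : 0 < (1 - t) * x0 + t * x1 := by nlinarith
  have hX1 : (1 - t) * x0 + t * x1 < 1 := by nlinarith
  have hbelow : (1 - t) * orContour m x0 + t * orContour m x1 <
      orContour m ((1 - t) * x0 + t * x1) :=
    (strictConcaveOn_orContour hm).2 hx00.le hx10.le hne (by linarith) ht0 (by ring)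
  have hY1 := hbelow.trans (orContour_lt_one (by linarith) hX0.le hX1)
  exact (OR_lt_iff_lt_orContour (by linarith) hX0 hX1 hY1).2 hbelow
end
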